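/- Let X and Y be forests over an alphabet 𝒳 and let c be a cost function over 𝒳 that is non-negative, self-equal, and conforms to the triangular inequality; let x̄_k be an ancestor of (or equal to) x̄_i in X and ȳ_l an ancestor of (or equal to) ȳ_j in Y. Then the base cases of the subforest edit distance hold: D_c(ε, ε) = 0; D_c(X[i, rl_X(k)], ε) = c(x_i, −) + D_c(X[i+1, rl_X(k)], ε); and D_c(ε, Y[j, rl_Y(l)]) = c(−, y_j) + D_c(ε, Y[j+1, rl_Y(l)]). -/

import Mathlib

namespace TED

/-- A tree over an alphabet `α`: a label together with a (possibly empty) list of children. -/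
inductive PTree (α : Type) where
  | node : α → List (PTree α) → PTree α

/-- A forest over `α` is a finite list of trees; `[]` is the empty forest `ε`. -/
abbrev Forest (α : Type) := List (PTree α)

namespace PTree

/-- The label of (the root of) a tree. -/
def label {α : Type} : PTree α → α
  | node a _ => a

/-- The children of (the root of) a tree. -/
def children {α : Type} : PTree α → List (PTree α)
  | node _ cs => cs

mutual
  /-- The number of nodes of a tree. -/
  def size {α : Type} : PTree α → ℕ
    | node _ cs => 1 + sizeL cs
  /-- The number of nodes of a forest. -/
  def sizeL {α : Type} : List (PTree α) → ℕ
    | [] => 0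
    | t :: ts => size t + sizeL ts
end

mutual
  /-- The pre-order list of all subtrees of a tree. -/
  def subtreesT {α : Type} : PTree α → List (PTree α)
    | node a cs => node a cs :: subtreesL cs
  /-- The pre-order list of all subtrees of a forest. -/
  def subtreesL {α : Type} : List (PTree α) → List (PTree α)
    | [] => []
    | t :: ts => subtreesT t ++ subtreesL ts
end

end PTree

open PTree

/-- The pre-order `π(X)` of a forest: the list of all its subtrees. -/
def preorder {α : Type} (F : Forest α) : List (PTree α) := PTree.subtreesL F

/-- The size `|X|` of a forest: the length of its pre-order. -/
def fsize {α : Type} (F : Forest α) : ℕ := (preorder F).length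

/-- The `i`-th subtree `x̄_i` (1-indexed pre-order) of a forest, if it exists. -/
def treeAt {α : Type} (F : Forest α) (i : ℕ) : Option (PTree α) := (preorder F)[i - 1]?

/-- The label `x_i` of the `i`-th subtree, as an element of `𝒳 ∪ {−}`
(`none` plays the role of the gap symbol `−`). -/
def labelAt {α : Type} (F : Forest α) (i : ℕ) : Option α := (treeAt F i).map PTree.label

/-- The number of nodes of the `i`-th subtree `x̄_i`. -/
def sizeAt {α : Type} (F : Forest α) (i : ℕ) : ℕ := ((treeAt F i).map PTree.size).getD 0

/-- A cost function over `α`: a real-valued function on `(𝒳 ∪ {−}) × (𝒳 ∪ {−})`,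
where the gap symbol `−` is modelled by `none`. -/
abbrev Cost (α : Type) := Option α → Option α → ℝ

/-- `c` is non-negative. -/
def Nonneg {α : Type} (c : Cost α) : Prop := ∀ x y, 0 ≤ c x y
/-- `c` is self-equal. -/
def SelfEq {α : Type} (c : Cost α) : Prop := ∀ x, c x x = 0
/-- `c` is discernible. -/
def Discernible {α : Type} (c : Cost α) : Prop := ∀ x y, x ≠ y → 0 < c x y
/-- `c` is symmetric. -/
def Symm {α : Type} (c : Cost α) : Prop := ∀ x y, c x y = c y x
/-- `c` conforms to the triangular inequality. -/
def Triangle {α : Type} (c : Cost α) : Prop := ∀ x y z, c x z ≤ c x y + c y z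

/-- Deletion of the first root: its children are spliced into its place. -/
def delRoot {α : Type} : Forest α → Forest α
  | [] => []
  | PTree.node _ cs :: ts => cs ++ ts

/-- Replacement of the label of the first root by `y`. -/
def repRoot {α : Type} (y : α) : Forest α → Forest α
  | [] => []
  | PTree.node _ cs :: ts => PTree.node y cs :: ts

/-- Insertion of a new root labeled `y` at root level, adopting the trees
`l` to `r-1` of the forest as its children. -/
def insRoot {α : Type} (y : α) (l r : ℕ) (F : Forest α) : Forest α :=
  if r > F.length + 1 ∨ l > r ∨ l < 1 then F
  else if l = r then F.take (l - 1) ++ [PTree.node y []] ++ F.drop (l - 1)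
  else F.take (l - 1) ++ [PTree.node y ((F.drop (l - 1)).take (r - l))] ++ F.drop (r - 1)

/-- `del_i`: deletion of the node with pre-order index `i`. -/
def applyDel {α : Type} : ℕ → Forest α → Forest α
  | _, [] => []
  | i, PTree.node a cs :: ts =>
    if i < 1 then PTree.node a cs :: ts
    else if i = 1 then delRoot (PTree.node a cs :: ts)
    else if i ≤ size (PTree.node a cs) then PTree.node a (applyDel (i - 1) cs) :: ts
    else PTree.node a cs :: applyDel (i - size (PTree.node a cs)) ts
  termination_by _ F => sizeOf F

/-- `rep_{i,y}`: replacement of the label of the node with pre-order index `i` by `y`. -/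
def applyRep {α : Type} (y : α) : ℕ → Forest α → Forest α
  | _, [] => []
  | i, PTree.node a cs :: ts =>
    if i < 1 then PTree.node a cs :: ts
    else if i = 1 then repRoot y (PTree.node a cs :: ts)
    else if i ≤ size (PTree.node a cs) then PTree.node a (applyRep y (i - 1) cs) :: ts
    else PTree.node a cs :: applyRep y (i - size (PTree.node a cs)) ts
  termination_by _ F => sizeOf F

/-- `ins_{i,y,l,r}`: insertion of a node labeled `y` as a child of the node with
pre-order index `i` (at root level if `i = 0`), adopting that node's children
`l` through `r-1` as its children. -/
def applyIns {α : Type} (y : α) (l r : ℕ) : ℕ → Forest α → Forest α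
  | 0, F => insRoot y l r F
  | _ + 1, [] => []
  | i + 1, PTree.node a cs :: ts =>
    if i + 1 ≤ size (PTree.node a cs) then PTree.node a (applyIns y l r i cs) :: ts
    else PTree.node a cs :: applyIns y l r (i + 1 - size (PTree.node a cs)) ts
  termination_by _ F => sizeOf F

/-- The standard edits: deletions `del_i`, replacements `rep_{i,y}` and
insertions `ins_{i,y,l,r}`. -/
inductive Edit (α : Type) where
  | del (i : ℕ)
  | rep (i : ℕ) (y : α)
  | ins (i : ℕ) (y : α) (l r : ℕ)

/-- Application of a single edit to a forest. -/
def Edit.apply {α : Type} : Edit α → Forest α → Forest α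
  | .del i, F => applyDel i F
  | .rep i y, F => applyRep y i F
  | .ins i y l r, F => applyIns y l r i F

/-- Application of an edit script `δ̄ = δ₁,…,δ_T` to a forest (left to right). -/
def applyScript {α : Type} (δ : List (Edit α)) (F : Forest α) : Forest α :=
  δ.foldl (fun F e => e.apply F) F

open Classical in
/-- The cost of a single edit with respect to the forest it is applied to:
`0` if the edit leaves the forest unchanged, and otherwise `c(x_i, y)` for a
replacement, `c(x_i, −)` for a deletion and `c(−, y)` for an insertion. -/
noncomputable def editCost {α : Type} (c : Cost α) (e : Edit α) (F : Forest α) : ℝ :=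
  if e.apply F = F then 0
  else
    match e with
    | .del i => c (labelAt F i) none
    | .rep i y => c (labelAt F i) (some y)
    | .ins _ y _ _ => c none (some y)

/-- The cost `c(δ̄, X)` of an edit script: the sum of the costs of its edits,
each evaluated on the forest to which it is applied. -/
noncomputable def scriptCost {α : Type} (c : Cost α) : List (Edit α) → Forest α → ℝ
  | [], _ => 0
  | e :: es, F => editCost c e F + scriptCost c es (e.apply F)

/-- The (subforest) edit distance `D_c(F, G)`: the infimum of the costs of edit
scripts transforming `F` into `G`. -/
noncomputable def fdist {α : Type} (c : Cost α) (F G : Forest α) : ℝ :=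
  sInf { r : ℝ | ∃ δ : List (Edit α), applyScript δ F = G ∧ scriptCost c δ F = r }

/-- The generalized tree edit distance `d_c(x̄, ȳ)` between two trees. -/
noncomputable def ted {α : Type} (c : Cost α) (x y : PTree α) : ℝ := fdist c [x] [y]

/-- `x̄_k` is a (proper) ancestor of `x̄_i`, expressed via 1-indexed pre-order indices:
the descendants of `x̄_k` occupy exactly the pre-order indices `k+1, …, k + |x̄_k| - 1`. -/
def AncestorIdx {α : Type} (F : Forest α) (k i : ℕ) : Prop :=
  k < i ∧ i < k + sizeAt F k

/-- A tree mapping between two forests: a set `M ⊆ {1,…,|F|} × {1,…,|G|}` such that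
for all `(i,j), (i',j') ∈ M` we have `i = i' ↔ j = j'`, `i ≤ i' ↔ j ≤ j'`, and
`x̄_i` is an ancestor of `x̄_{i'}` iff `ȳ_j` is an ancestor of `ȳ_{j'}`. -/
def IsTreeMapping {α : Type} (F G : Forest α) (M : Finset (ℕ × ℕ)) : Prop :=
  (∀ p ∈ M, 1 ≤ p.1 ∧ p.1 ≤ fsize F ∧ 1 ≤ p.2 ∧ p.2 ≤ fsize G) ∧
  (∀ p ∈ M, ∀ q ∈ M,
    (p.1 = q.1 ↔ p.2 = q.2) ∧
    (p.1 ≤ q.1 ↔ p.2 ≤ q.2) ∧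
    (AncestorIdx F p.1 q.1 ↔ AncestorIdx G p.2 q.2))

/-- The cost `c(M, X, Y)` of a tree mapping: the sum of the replacement costs of
the mapped pairs, the deletion costs of the unmapped nodes of `X`, and the
insertion costs of the unmapped nodes of `Y`. -/
noncomputable def mapCost {α : Type} (c : Cost α) (F G : Forest α) (M : Finset (ℕ × ℕ)) : ℝ :=
  (∑ p ∈ M, c (labelAt F p.1) (labelAt G p.2))
  + (∑ i ∈ (Finset.Icc 1 (fsize F)).filter (fun i => ∀ p ∈ M, p.1 ≠ i), c (labelAt F i) none)
  + (∑ j ∈ (Finset.Icc 1 (fsize G)).filter (fun j => ∀ p ∈ M, p.2 ≠ j), c none (labelAt G j))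

/-- A co-optimal tree mapping: a tree mapping of minimum cost. -/
def IsCoOptimal {α : Type} (c : Cost α) (F G : Forest α) (M : Finset (ℕ × ℕ)) : Prop :=
  IsTreeMapping F G M ∧
  ∀ M' : Finset (ℕ × ℕ), IsTreeMapping F G M' → mapCost c F G M ≤ mapCost c F G M'

mutual
  /-- The 1-indexed pre-order position of the rightmost leaf within a tree. -/
  def rlIdx {α : Type} : PTree α → ℕ
    | .node _ cs => rlGo 1 cs
  /-- Helper: the pre-order position of the rightmost leaf of the last tree of a
  forest, where `acc` pre-order positions precede the forest. -/
  def rlGo {α : Type} : ℕ → List (PTree α) → ℕ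
    | acc, [] => acc
    | acc, [t] => acc + rlIdx t
    | acc, t :: ts => rlGo (acc + size t) ts
end

/-- The outermost right leaf `rl_X(i)`: the pre-order index of the rightmost leaf
of the subtree `x̄_i`. -/
def rlAt {α : Type} (F : Forest α) (i : ℕ) : ℕ :=
  match treeAt F i with
  | some t => i + rlIdx t - 1
  | none => i

/-- Helper for the subforest extraction: keeps the nodes with pre-order indices
between `i` and `j` (preserving ancestral structure); `k` is the pre-order index
of the last node already visited. -/
def subAux {α : Type} : Forest α → ℕ → ℕ → ℕ → Forest α × ℕ
  | [], _, _, k => ([], k)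
  | PTree.node a cs :: ts, i, j, k =>
    if k + 1 > j then ([], k + 1)
    else if k + 1 ≥ i then
      let P := subAux cs i j (k + 1)
      let Q := subAux ts i j P.2
      (PTree.node a P.1 :: Q.1, Q.2)
    else
      let P := subAux cs i j (k + 1)
      let Q := subAux ts i j P.2
      (P.1 ++ Q.1, Q.2)
  termination_by F _ _ _ => sizeOf F

/-- The subforest `X[i, j]`: the restriction of `X` to the nodes with pre-order
indices `i, …, j`, preserving the ancestral structure among them. -/
def subforest {α : Type} (F : Forest α) (i j : ℕ) : Forest α := (subAux F i j 0).1

/-!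
For a non-negative cost obeying the triangle inequality, `Σ c(x, −)` over the nodes of a
forest is a potential that no edit lowers by more than its cost, while deleting the roots one
by one lowers it by exactly the cost of each deletion; hence `D_c(X, ε) = Σ_{x ∈ X} c(x, −)`,
and dually `D_c(ε, Y) = Σ_{y ∈ Y} c(−, y)`, attained by inserting the nodes of `Y` bottom-up.
The pre-order of `X[i, j]` is the slice `x_i, …, x_j` of that of `X`, and `i ≤ rl_X(k)`, so
both sums split off the term of node `i`.
-/

variable {α : Type}

theorem size_pos (t : PTree α) : 0 < size t := by
  cases t with
  | node a cs => rw [size]; omega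

theorem sizeL_cons (a : α) (cs ts : Forest α) :
    sizeL (node a cs :: ts) = 1 + sizeL cs + sizeL ts := by
  rw [sizeL, size]

mutual
  theorem length_subtreesT (t : PTree α) : (subtreesT t).length = size t := by
    cases t with
    | node a cs => rw [subtreesT, size, List.length_cons, length_subtreesL]; omega
  theorem length_subtreesL (F : Forest α) : (subtreesL F).length = sizeL F := by
    cases F with
    | nil => rfl
    | cons t ts => rw [subtreesL, sizeL, List.length_append, length_subtreesT, length_subtreesL]
end

theorem subtreesL_cons (a : α) (cs ts : Forest α) :
    subtreesL (node a cs :: ts) = node a cs :: (subtreesL cs ++ subtreesL ts) := by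
  rw [subtreesL, subtreesT, List.cons_append]

theorem subtreesL_append (A B : Forest α) : subtreesL (A ++ B) = subtreesL A ++ subtreesL B := by
  induction A with
  | nil => rfl
  | cons t ts ih => rw [List.cons_append, subtreesL, subtreesL, ih, List.append_assoc]

theorem fsize_eq_sizeL (F : Forest α) : fsize F = sizeL F := length_subtreesL F

mutual
  theorem rlIdx_eq_size : ∀ t : PTree α, rlIdx t = size t
    | .node a cs => by rw [rlIdx, rlGo_eq_size, size]
  theorem rlGo_eq_size : ∀ (acc : ℕ) (ts : Forest α), rlGo acc ts = acc + sizeL ts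
    | acc, [] => by rw [rlGo, sizeL]; rfl
    | acc, [t] => by rw [rlGo, rlIdx_eq_size, sizeL, sizeL]; rfl
    | acc, t :: t' :: ts => by
      rw [rlGo, rlGo_eq_size (acc + size t) (t' :: ts)]
      · rw [show sizeL (t :: t' :: ts) = size t + sizeL (t' :: ts) from rfl, Nat.add_assoc]
      · simp
end

theorem le_rlAt {F : Forest α} {i k : ℕ} (hki : k = i ∨ AncestorIdx F k i) :
    i ≤ rlAt F k := by
  unfold AncestorIdx sizeAt at hki
  cases h : treeAt F k with
  | none => simp only [h, Option.map_none, Option.getD_none] at hki; simp only [rlAt, h]; omega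
  | some t =>
    simp only [h, Option.map_some, Option.getD_some] at hki
    have := size_pos t
    simp only [rlAt, h, rlIdx_eq_size]
    omega

def labels (F : Forest α) : List α := (preorder F).map label

@[simp] theorem labels_nil : labels ([] : Forest α) = [] := rfl

@[simp] theorem labels_cons (a : α) (cs ts : Forest α) :
    labels (node a cs :: ts) = a :: (labels cs ++ labels ts) := by
  simp [labels, preorder, subtreesL_cons, label]

@[simp] theorem labels_append (A B : Forest α) : labels (A ++ B) = labels A ++ labels B := by
  simp [labels, preorder, subtreesL_append]

theorem length_labels (F : Forest α) : (labels F).length = sizeL F := by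
  simp [labels, preorder, length_subtreesL]

theorem labelAt_eq (F : Forest α) (i : ℕ) : labelAt F i = (labels F)[i - 1]? := by
  simp [labelAt, treeAt, labels]

theorem labelAt_cons_one (a : α) (cs ts : Forest α) : labelAt (node a cs :: ts) 1 = some a := by
  simp [labelAt_eq]

theorem labelAt_cons_of_le (a : α) (cs ts : Forest α) {i : ℕ} (h2 : 2 ≤ i)
    (hle : i ≤ size (node a cs)) : labelAt (node a cs :: ts) i = labelAt cs (i - 1) := by
  rw [size] at hle
  rw [labelAt_eq, labelAt_eq, labels_cons, show i - 1 = i - 2 + 1 by omega,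
    List.getElem?_cons_succ, List.getElem?_append_left (by rw [length_labels]; omega)]
  rfl

theorem labelAt_cons_of_lt (a : α) (cs ts : Forest α) {i : ℕ} (hlt : size (node a cs) < i) :
    labelAt (node a cs :: ts) i = labelAt ts (i - size (node a cs)) := by
  rw [size] at hlt ⊢
  rw [labelAt_eq, labelAt_eq, labels_cons, show i - 1 = i - 2 + 1 by omega,
    List.getElem?_cons_succ, List.getElem?_append_right (by rw [length_labels]; omega),
    length_labels, show i - 2 - sizeL cs = i - (1 + sizeL cs) - 1 by omega]

def weight (f : α → ℝ) (F : Forest α) : ℝ := ((labels F).map f).sum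

@[simp] theorem weight_nil (f : α → ℝ) : weight f [] = 0 := rfl

@[simp] theorem weight_cons (f : α → ℝ) (a : α) (cs ts : Forest α) :
    weight f (node a cs :: ts) = f a + weight f cs + weight f ts := by
  simp [weight, add_assoc]

@[simp] theorem weight_append (f : α → ℝ) (A B : Forest α) :
    weight f (A ++ B) = weight f A + weight f B := by
  simp [weight]

theorem applyDel_eq_self_or_weight (f : α → ℝ) (i : ℕ) (F : Forest α) :
    applyDel i F = F ∨
      ∃ a, labelAt F i = some a ∧ weight f (applyDel i F) + f a = weight f F := by
  match F with
  | [] => left; rw [applyDel]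
  | node a cs :: ts =>
    rw [applyDel]
    split_ifs with h1 h2 h3
    · left; rfl
    · right
      subst h2
      refine ⟨a, labelAt_cons_one a cs ts, ?_⟩
      simp only [delRoot, weight_append, weight_cons]
      ring
    · rcases applyDel_eq_self_or_weight f (i - 1) cs with hc | ⟨a', hl, hw⟩
      · left; rw [hc]
      · right
        refine ⟨a', by rwa [labelAt_cons_of_le a cs ts (by omega) h3], ?_⟩
        simp only [weight_cons]; linarith
    · rcases applyDel_eq_self_or_weight f (i - size (node a cs)) ts with hc | ⟨a', hl, hw⟩
      · left; rw [hc]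
      · right
        refine ⟨a', by rwa [labelAt_cons_of_lt a cs ts (by omega)], ?_⟩
        simp only [weight_cons]; linarith
  termination_by sizeOf F

theorem applyRep_eq_self_or_weight (f : α → ℝ) (y : α) (i : ℕ) (F : Forest α) :
    applyRep y i F = F ∨
      ∃ a, labelAt F i = some a ∧ weight f (applyRep y i F) + f a = weight f F + f y := by
  match F with
  | [] => left; rw [applyRep]
  | node a cs :: ts =>
    rw [applyRep]
    split_ifs with h1 h2 h3
    · left; rfl
    · right
      subst h2
      exact ⟨a, labelAt_cons_one a cs ts, by simp only [repRoot, weight_cons]; ring⟩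
    · rcases applyRep_eq_self_or_weight f y (i - 1) cs with hc | ⟨a', hl, hw⟩
      · left; rw [hc]
      · right
        refine ⟨a', by rwa [labelAt_cons_of_le a cs ts (by omega) h3], ?_⟩
        simp only [weight_cons]; linarith
    · rcases applyRep_eq_self_or_weight f y (i - size (node a cs)) ts with hc | ⟨a', hl, hw⟩
      · left; rw [hc]
      · right
        refine ⟨a', by rwa [labelAt_cons_of_lt a cs ts (by omega)], ?_⟩
        simp only [weight_cons]; linarith
  termination_by sizeOf F

theorem insRoot_eq_self_or_weight (f : α → ℝ) (y : α) (l r : ℕ) (F : Forest α) :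
    insRoot y l r F = F ∨ weight f (insRoot y l r F) = weight f F + f y := by
  rw [insRoot]
  split_ifs with h1 h2
  · left; rfl
  · right
    conv_rhs => rw [← List.take_append_drop (l - 1) F]
    simp only [weight_append, weight_cons, weight_nil]
    ring
  · right
    have hsplit : F = F.take (l - 1) ++ ((F.drop (l - 1)).take (r - l) ++ F.drop (r - 1)) := by
      rw [show r - 1 = l - 1 + (r - l) by omega, ← List.drop_drop, List.take_append_drop,
        List.take_append_drop]
    conv_rhs => rw [hsplit]
    simp only [weight_append, weight_cons, weight_nil]
    ring

theorem applyIns_eq_self_or_weight (f : α → ℝ) (y : α) (l r i : ℕ) (F : Forest α) :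
    applyIns y l r i F = F ∨ weight f (applyIns y l r i F) = weight f F + f y := by
  match i, F with
  | 0, F => rw [applyIns]; exact insRoot_eq_self_or_weight f y l r F
  | i + 1, [] => left; rw [applyIns]
  | i + 1, node a cs :: ts =>
    rw [applyIns]
    split_ifs
    · rcases applyIns_eq_self_or_weight f y l r i cs with hc | hw
      · left; rw [hc]
      · right; simp only [weight_cons, hw]; ring
    · rcases applyIns_eq_self_or_weight f y l r (i + 1 - size (node a cs)) ts with hc | hw
      · left; rw [hc]
      · right; simp only [weight_cons, hw]; ring
  termination_by sizeOf F

-- A replacement `a ↦ y` changes the potential by `c(y,−) − c(a,−) ≥ −c(a,y)`.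
theorem weight_le_editCost_add_weight_apply (c : Cost α) (hnn : Nonneg c) (htr : Triangle c)
    (e : Edit α) (F : Forest α) :
    weight (fun a => c (some a) none) F
      ≤ editCost c e F + weight (fun a => c (some a) none) (e.apply F) := by
  rw [editCost.eq_def]
  split_ifs with heq
  · rw [heq, zero_add]
  cases e with
  | del i =>
    rcases applyDel_eq_self_or_weight (fun a => c (some a) none) i F with hc | ⟨a, hl, hw⟩
    · exact absurd hc heq
    · simp only [Edit.apply, hl] at hw ⊢; linarith
  | rep i y =>
    rcases applyRep_eq_self_or_weight (fun a => c (some a) none) y i F with hc | ⟨a, hl, hw⟩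
    · exact absurd hc heq
    · simp only [Edit.apply, hl] at hw ⊢; linarith [htr (some a) (some y) none]
  | ins i y l r =>
    rcases applyIns_eq_self_or_weight (fun a => c (some a) none) y l r i F with hc | hw
    · exact absurd hc heq
    · simp only [Edit.apply] at hw ⊢; linarith [hnn none (some y), hnn (some y) none]

-- A replacement `a ↦ y` changes the potential by `c(−,y) − c(−,a) ≤ c(a,y)`.
theorem weight_apply_le_editCost_add_weight (c : Cost α) (hnn : Nonneg c) (htr : Triangle c)
    (e : Edit α) (F : Forest α) :
    weight (fun a => c none (some a)) (e.apply F)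
      ≤ editCost c e F + weight (fun a => c none (some a)) F := by
  rw [editCost.eq_def]
  split_ifs with heq
  · rw [heq, zero_add]
  cases e with
  | del i =>
    rcases applyDel_eq_self_or_weight (fun a => c none (some a)) i F with hc | ⟨a, hl, hw⟩
    · exact absurd hc heq
    · simp only [Edit.apply] at hw ⊢; linarith [hnn (labelAt F i) none, hnn none (some a)]
  | rep i y =>
    rcases applyRep_eq_self_or_weight (fun a => c none (some a)) y i F with hc | ⟨a, hl, hw⟩
    · exact absurd hc heq
    · simp only [Edit.apply, hl] at hw ⊢; linarith [htr none (some a) (some y)]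
  | ins i y l r =>
    rcases applyIns_eq_self_or_weight (fun a => c none (some a)) y l r i F with hc | hw
    · exact absurd hc heq
    · simp only [Edit.apply] at hw ⊢; linarith

theorem weight_le_scriptCost_add_weight_applyScript (c : Cost α) (hnn : Nonneg c)
    (htr : Triangle c) (δ : List (Edit α)) (F : Forest α) :
    weight (fun a => c (some a) none) F
      ≤ scriptCost c δ F + weight (fun a => c (some a) none) (applyScript δ F) := by
  induction δ generalizing F with
  | nil => simp [scriptCost, applyScript]
  | cons e δ ih =>
    have := weight_le_editCost_add_weight_apply c hnn htr e F
    have := ih (e.apply F)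
    rw [scriptCost, applyScript, List.foldl_cons]
    unfold applyScript at this
    linarith

theorem weight_applyScript_le_scriptCost_add_weight (c : Cost α) (hnn : Nonneg c)
    (htr : Triangle c) (δ : List (Edit α)) (F : Forest α) :
    weight (fun a => c none (some a)) (applyScript δ F)
      ≤ scriptCost c δ F + weight (fun a => c none (some a)) F := by
  induction δ generalizing F with
  | nil => simp [scriptCost, applyScript]
  | cons e δ ih =>
    have := weight_apply_le_editCost_add_weight c hnn htr e F
    have := ih (e.apply F)
    rw [scriptCost, applyScript, List.foldl_cons]
    unfold applyScript at this
    linarith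

theorem applyScript_append (δ₁ δ₂ : List (Edit α)) (F : Forest α) :
    applyScript (δ₁ ++ δ₂) F = applyScript δ₂ (applyScript δ₁ F) :=
  List.foldl_append

theorem scriptCost_append (c : Cost α) (δ₁ δ₂ : List (Edit α)) (F : Forest α) :
    scriptCost c (δ₁ ++ δ₂) F =
      scriptCost c δ₁ F + scriptCost c δ₂ (applyScript δ₁ F) := by
  induction δ₁ generalizing F with
  | nil => simp [scriptCost, applyScript]
  | cons e δ ih => rw [List.cons_append, scriptCost, scriptCost, ih, add_assoc]; rfl

theorem scriptCost_singleton (c : Cost α) (e : Edit α) (F : Forest α) :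
    scriptCost c [e] F = editCost c e F := by
  rw [scriptCost, scriptCost, add_zero]

theorem ne_cons_append (a : α) (cs ts : Forest α) : cs ++ ts ≠ node a cs :: ts := by
  intro h
  simpa using congrArg (fun F => (labels F).length) h

theorem apply_del_one (a : α) (cs ts : Forest α) :
    (Edit.del 1).apply (node a cs :: ts) = cs ++ ts := by
  rw [Edit.apply, applyDel, if_neg (by omega), if_pos rfl, delRoot]

theorem apply_ins_zero (a : α) (cs F : Forest α) :
    (Edit.ins 0 a 1 (cs.length + 1)).apply (cs ++ F) = node a cs :: F := by
  rw [Edit.apply, applyIns, insRoot, if_neg (by simp)]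
  split_ifs with h
  · simp [List.length_eq_zero_iff.mp (by omega : cs.length = 0)]
  · simp

theorem exists_script_to_nil (c : Cost α) (F : Forest α) :
    ∃ δ, applyScript δ F = [] ∧ scriptCost c δ F = weight (fun a => c (some a) none) F := by
  match F with
  | [] => exact ⟨[], rfl, rfl⟩
  | node a cs :: ts =>
    obtain ⟨δ, hδ, hcost⟩ := exists_script_to_nil c (cs ++ ts)
    refine ⟨Edit.del 1 :: δ, by rwa [applyScript, List.foldl_cons, apply_del_one], ?_⟩
    have hne : (Edit.del 1).apply (node a cs :: ts) ≠ node a cs :: ts := by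
      rw [apply_del_one]; exact ne_cons_append a cs ts
    rw [scriptCost, editCost.eq_def, if_neg hne, apply_del_one, hcost]
    simp only [labelAt_cons_one, weight_append, weight_cons]
    ring
  termination_by (labels F).length
  decreasing_by simp

-- Builds the trees of `G` from the last one backwards, each one bottom-up: the new root adopts
-- the already built children standing at the front.
theorem exists_script_prepend (c : Cost α) (G F : Forest α) :
    ∃ δ, applyScript δ F = G ++ F ∧
      scriptCost c δ F = weight (fun a => c none (some a)) G := by
  match G with
  | [] => exact ⟨[], rfl, rfl⟩
  | node a cs :: ts =>
    obtain ⟨δts, hts, cost_ts⟩ := exists_script_prepend c ts F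
    obtain ⟨δcs, hcs, cost_cs⟩ := exists_script_prepend c cs (ts ++ F)
    have hne : (Edit.ins 0 a 1 (cs.length + 1)).apply (cs ++ (ts ++ F)) ≠ cs ++ (ts ++ F) := by
      rw [apply_ins_zero]; exact (ne_cons_append a cs (ts ++ F)).symm
    refine ⟨δts ++ δcs ++ [Edit.ins 0 a 1 (cs.length + 1)], ?_, ?_⟩
    · rw [applyScript_append, applyScript_append, hts, hcs]
      exact apply_ins_zero a cs (ts ++ F)
    · rw [scriptCost_append, scriptCost_append, applyScript_append, hts, hcs, cost_ts, cost_cs,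
        scriptCost_singleton, editCost.eq_def, if_neg hne, weight_cons]
      ring
  termination_by sizeOf G

theorem fdist_nil_right (c : Cost α) (hnn : Nonneg c) (htr : Triangle c) (F : Forest α) :
    fdist c F [] = weight (fun a => c (some a) none) F := by
  refine IsLeast.csInf_eq ⟨exists_script_to_nil c F, ?_⟩
  rintro _ ⟨δ, hδ, rfl⟩
  simpa [hδ] using weight_le_scriptCost_add_weight_applyScript c hnn htr δ F

theorem fdist_nil_left (c : Cost α) (hnn : Nonneg c) (htr : Triangle c) (G : Forest α) :
    fdist c [] G = weight (fun a => c none (some a)) G := by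
  refine IsLeast.csInf_eq ⟨by simpa using exists_script_prepend c G [], ?_⟩
  rintro _ ⟨δ, hδ, rfl⟩
  simpa [hδ] using weight_applyScript_le_scriptCost_add_weight c hnn htr δ []

theorem subAux_cons (a : α) (cs ts : Forest α) (i j k : ℕ) :
    subAux (node a cs :: ts) i j k =
      if j < k + 1 then ([], k + 1) else
        let P := subAux cs i j (k + 1)
        let Q := subAux ts i j P.2
        (if i ≤ k + 1 then node a P.1 :: Q.1 else P.1 ++ Q.1, Q.2) := by
  rw [subAux]
  split_ifs <;> rfl

theorem subAux_cons_snd (a : α) (cs ts : Forest α) (i j k : ℕ) :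
    (subAux (node a cs :: ts) i j k).2 =
      if j < k + 1 then k + 1 else (subAux ts i j (subAux cs i j (k + 1)).2).2 := by
  rw [subAux_cons]
  split_ifs <;> rfl

theorem subAux_fst_of_le (F : Forest α) {i j k : ℕ} (h : j ≤ k) : (subAux F i j k).1 = [] := by
  cases F with
  | nil => rw [subAux]
  | cons t ts => cases t; rw [subAux_cons, if_pos (by omega)]

theorem le_subAux_snd : ∀ (F : Forest α) (i j k : ℕ), k ≤ (subAux F i j k).2
  | [], i, j, k => by rw [subAux]
  | node a cs :: ts, i, j, k => by
    have := le_subAux_snd cs i j (k + 1)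
    have := le_subAux_snd ts i j (subAux cs i j (k + 1)).2
    rw [subAux_cons_snd]
    split_ifs <;> omega
  termination_by F => sizeOf F

theorem subAux_snd_of_le : ∀ (F : Forest α) (i j k : ℕ), k + sizeL F ≤ j →
    (subAux F i j k).2 = k + sizeL F
  | [], i, j, k, _ => by rw [subAux, sizeL, add_zero]
  | node a cs :: ts, i, j, k, h => by
    rw [sizeL_cons] at h ⊢
    have hcs := subAux_snd_of_le cs i j (k + 1) (by omega)
    rw [subAux_cons_snd, if_neg (by omega), subAux_snd_of_le ts i j _ (by omega), hcs]
    omega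
  termination_by F => sizeOf F

theorem lt_subAux_snd : ∀ (F : Forest α) (i j k : ℕ), j < k + sizeL F →
    j < (subAux F i j k).2
  | [], i, j, k, h => by rw [sizeL] at h; rw [subAux]; omega
  | node a cs :: ts, i, j, k, h => by
    rw [sizeL_cons] at h
    rw [subAux_cons_snd]
    split_ifs with hj
    · omega
    by_cases hcs : j < k + 1 + sizeL cs
    · have := lt_subAux_snd cs i j (k + 1) hcs
      have := le_subAux_snd ts i j (subAux cs i j (k + 1)).2
      omega
    · have hP := subAux_snd_of_le cs i j (k + 1) (by omega)
      exact lt_subAux_snd ts i j _ (by omega)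
  termination_by F => sizeOf F

-- `subAux F i j k` visits the nodes of `F` as the pre-order indices `k + 1, k + 2, …`.
theorem labels_subAux : ∀ (F : Forest α) (i j k : ℕ),
    labels (subAux F i j k).1 = ((labels F).take (j - k)).drop (i - 1 - k)
  | [], i, j, k => by rw [subAux]; simp
  | node a cs :: ts, i, j, k => by
    have hrest : labels (subAux cs i j (k + 1)).1
          ++ labels (subAux ts i j (subAux cs i j (k + 1)).2).1
        = ((labels cs ++ labels ts).take (j - (k + 1))).drop (i - 1 - (k + 1)) := by
      rw [labels_subAux cs]
      by_cases hcs : k + 1 + sizeL cs ≤ j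
      · have htake : (labels cs).take (j - (k + 1)) = labels cs :=
          List.take_of_length_le (by rw [length_labels]; omega)
        rw [labels_subAux ts, subAux_snd_of_le cs i j (k + 1) hcs, List.take_append,
          List.drop_append, htake, length_labels, Nat.sub_sub j, Nat.sub_sub (i - 1)]
      · rw [subAux_fst_of_le ts (lt_subAux_snd cs i j (k + 1) (by omega)).le,
          List.take_append_of_le_length (by rw [length_labels]; omega), labels_nil,
          List.append_nil]
    rw [subAux_cons]
    split_ifs with hj hi
    · simp [show j - k = 0 by omega]
    · rw [labels_cons, labels_cons, hrest, show j - k = j - (k + 1) + 1 by omega,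
        show i - 1 - k = 0 by omega, show i - 1 - (k + 1) = 0 by omega, List.take_succ_cons]
      rfl
    · rw [labels_append, hrest, labels_cons, show j - k = j - (k + 1) + 1 by omega,
        show i - 1 - k = i - 1 - (k + 1) + 1 by omega, List.take_succ_cons, List.drop_succ_cons]
  termination_by F => sizeOf F

theorem labels_subforest (F : Forest α) (i j : ℕ) :
    labels (subforest F i j) = ((labels F).take j).drop (i - 1) := by
  rw [subforest]
  simpa using labels_subAux F i j 0

theorem labels_subforest_eq_cons (F : Forest α) {i j : ℕ} (hi : 1 ≤ i) (hij : i ≤ j)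
    (hiF : i ≤ fsize F) :
    ∃ a, labelAt F i = some a ∧
      labels (subforest F i j) = a :: labels (subforest F (i + 1) j) := by
  have hlen : i - 1 < ((labels F).take j).length := by
    rw [List.length_take, length_labels, ← fsize_eq_sizeL]; omega
  refine ⟨((labels F).take j)[i - 1], ?_, ?_⟩
  · rw [labelAt_eq, List.getElem_take, List.getElem?_eq_getElem]
  · rw [labels_subforest, labels_subforest, List.drop_eq_getElem_cons hlen, Nat.add_sub_cancel,
      Nat.sub_add_cancel hi]

/-- The base cases of the subforest edit distance: the distance
between empty forests is `0`; transforming a subforest into the empty forest deletes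
its first node; and transforming the empty forest into a subforest inserts the first
node. -/
theorem fdist_base_cases {α : Type} (c : Cost α) (hnn : Nonneg c) (hse : SelfEq c)
    (htr : Triangle c) (F G : Forest α) (hF : F ≠ []) (hG : G ≠ [])
    (i k : ℕ) (hi1 : 1 ≤ i) (hi2 : i ≤ fsize F) (hk1 : 1 ≤ k) (hk2 : k ≤ fsize F)
    (hki : k = i ∨ AncestorIdx F k i)
    (j l : ℕ) (hj1 : 1 ≤ j) (hj2 : j ≤ fsize G) (hl1 : 1 ≤ l) (hl2 : l ≤ fsize G)
    (hlj : l = j ∨ AncestorIdx G l j) :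
    fdist c ([] : Forest α) ([] : Forest α) = 0 ∧
    fdist c (subforest F i (rlAt F k)) ([] : Forest α) =
      c (labelAt F i) none + fdist c (subforest F (i + 1) (rlAt F k)) ([] : Forest α) ∧
    fdist c ([] : Forest α) (subforest G j (rlAt G l)) =
      c none (labelAt G j) + fdist c ([] : Forest α) (subforest G (j + 1) (rlAt G l)) := by
  obtain ⟨a, hxi, hsubF⟩ := labels_subforest_eq_cons F hi1 (le_rlAt hki) hi2
  obtain ⟨b, hyj, hsubG⟩ := labels_subforest_eq_cons G hj1 (le_rlAt hlj) hj2
  refine ⟨by rw [fdist_nil_right c hnn htr, weight_nil], ?_, ?_⟩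
  · simp only [fdist_nil_right c hnn htr, weight, hxi, hsubF, List.map_cons, List.sum_cons]
  · simp only [fdist_nil_left c hnn htr, weight, hyj, hsubG, List.map_cons, List.sum_cons]

end TED
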